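/- Let (L, [·,·], Δ, α, r) be a multiplicative coboundary (resp. quasi-triangular) Hom-Lie superbialgebra. Then for every integer n ≥ 0, L_{αⁿ} = (L, αⁿ∘[·,·], Δ∘αⁿ, α^{n+1}, r) is also a multiplicative coboundary (resp. quasi-triangular) Hom-Lie superbialgebra. -/

import Mathlib

open TensorProduct

variable (K : Type*) [Field K] [CharZero K]

/-- The super sign `(-1)^{p·q}` for parities `p q : ZMod 2`. -/
def eps (p q : ZMod 2) : K := (-1 : K) ^ (p.val * q.val)

variable {K}

section Defs

variable {L M : Type*} [AddCommGroup L] [Module K L] [AddCommGroup M] [Module K M]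

/-- `x` is homogeneous of parity `p` with respect to the grading involution `σ`
(`σ` acts as `(-1)^i` on the degree-`i` part of the `ℤ₂`-graded space). -/
def IsHomog (σ : L →ₗ[K] L) (p : ZMod 2) (x : L) : Prop :=
  σ x = ((-1 : K) ^ p.val) • x

/-- The operator multiplying a homogeneous element of parity `q` by `(-1)^{p·q}`. -/
noncomputable def signPow (σ : L →ₗ[K] L) (p : ZMod 2) : L →ₗ[K] L :=
  ((2 : K)⁻¹ * (1 + (-1 : K) ^ p.val)) • (LinearMap.id : L →ₗ[K] L)
    + ((2 : K)⁻¹ * (1 - (-1 : K) ^ p.val)) • σ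

/-- The operator multiplying `x ⊗ y` (with `x, y` homogeneous of parities `p, q`)
by the Koszul sign `(-1)^{p·q}`. -/
noncomputable def signOp (σL : L →ₗ[K] L) (σM : M →ₗ[K] M) :
    L ⊗[K] M →ₗ[K] L ⊗[K] M :=
  (2 : K)⁻¹ • ((LinearMap.id : L ⊗[K] M →ₗ[K] L ⊗[K] M)
    + TensorProduct.map σL LinearMap.id
    + TensorProduct.map LinearMap.id σM
    - TensorProduct.map σL σM)

/-- The super twist `τ(x ⊗ y) = (-1)^{|x||y|} y ⊗ x`. -/
noncomputable def superTwist (σ : L →ₗ[K] L) : L ⊗[K] L →ₗ[K] L ⊗[K] L :=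
  (TensorProduct.comm K L L).toLinearMap ∘ₗ signOp σ σ

/-- The super cyclic map `ξ(x ⊗ y ⊗ z) = (-1)^{|x|(|y|+|z|)} y ⊗ z ⊗ x`. -/
noncomputable def superCyclic (σ : L →ₗ[K] L) :
    L ⊗[K] (L ⊗[K] L) →ₗ[K] L ⊗[K] (L ⊗[K] L) :=
  (TensorProduct.assoc K L L L).toLinearMap
    ∘ₗ (TensorProduct.comm K L (L ⊗[K] L)).toLinearMap
    ∘ₗ signOp σ (TensorProduct.map σ σ)

/-- The adjoint action `ad_x` on `L ⊗ L`, for `x` homogeneous of parity `p`: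
`ad_x(y₁ ⊗ y₂) = [x,y₁] ⊗ α(y₂) + (-1)^{|x||y₁|} α(y₁) ⊗ [x,y₂]`. -/
noncomputable def adT (σ : L →ₗ[K] L) (br : L →ₗ[K] L →ₗ[K] L) (α : L →ₗ[K] L)
    (p : ZMod 2) (x : L) : L ⊗[K] L →ₗ[K] L ⊗[K] L :=
  TensorProduct.map (br x) α + TensorProduct.map (α ∘ₗ signPow σ p) (br x)

/-- The adjoint action `ad_x` on `L ⊗ (L ⊗ L)`, for `x` homogeneous of parity `p`. -/
noncomputable def adT3 (σ : L →ₗ[K] L) (br : L →ₗ[K] L →ₗ[K] L) (α : L →ₗ[K] L)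
    (p : ZMod 2) (x : L) :
    L ⊗[K] (L ⊗[K] L) →ₗ[K] L ⊗[K] (L ⊗[K] L) :=
  TensorProduct.map (br x) (TensorProduct.map α α)
    + TensorProduct.map (α ∘ₗ signPow σ p) (TensorProduct.map (br x) α)
    + TensorProduct.map (α ∘ₗ signPow σ p)
        (TensorProduct.map (α ∘ₗ signPow σ p) (br x))

/-- A Hom-Lie superalgebra `(L, [·,·], α)` with grading involution `σ`:
the bracket and `α` are even, the bracket is skew-supersymmetric and
satisfies the Hom-super-Jacobi identity. -/
def IsHomLieSuperalgebra (σ : L →ₗ[K] L) (br : L →ₗ[K] L →ₗ[K] L) (α : L →ₗ[K] L) : Prop :=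
  σ ∘ₗ σ = LinearMap.id
  ∧ (∀ x y, σ (br x y) = br (σ x) (σ y))
  ∧ (∀ x, σ (α x) = α (σ x))
  ∧ (∀ p q x y, IsHomog σ p x → IsHomog σ q y → br x y = -(eps K p q) • br y x)
  ∧ (∀ p q r x y z, IsHomog σ p x → IsHomog σ q y → IsHomog σ r z →
      eps K p r • br (α x) (br y z) + eps K r q • br (α z) (br x y)
        + eps K q p • br (α y) (br z x) = 0)

/-- Multiplicativity: `α([x,y]) = [α(x), α(y)]`. -/
def IsMultiplicative (br : L →ₗ[K] L →ₗ[K] L) (α : L →ₗ[K] L) : Prop :=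
  ∀ x y, α (br x y) = br (α x) (α y)

/-- A Hom-Lie supercoalgebra `(L, Δ, α)` with grading involution `σ`. -/
def IsHomLieSupercoalgebra (σ α : L →ₗ[K] L) (Δ : L →ₗ[K] L ⊗[K] L) : Prop :=
  σ ∘ₗ σ = LinearMap.id
  ∧ (∀ x, σ (α x) = α (σ x))
  ∧ TensorProduct.map σ σ ∘ₗ Δ = Δ ∘ₗ σ
  ∧ (∀ x, ∃ u, Δ x = u - superTwist σ u)
  ∧ (LinearMap.id + superCyclic σ + superCyclic σ ∘ₗ superCyclic σ)
      ∘ₗ TensorProduct.map α Δ ∘ₗ Δ = 0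

/-- Co-multiplicativity: `Δ ∘ α = α^{⊗2} ∘ Δ`. -/
def IsComultiplicative (α : L →ₗ[K] L) (Δ : L →ₗ[K] L ⊗[K] L) : Prop :=
  Δ ∘ₗ α = TensorProduct.map α α ∘ₗ Δ

/-- A Hom-Lie superbialgebra `(L, [·,·], Δ, α)`. -/
def IsHomLieSuperbialgebra (σ : L →ₗ[K] L) (br : L →ₗ[K] L →ₗ[K] L) (α : L →ₗ[K] L)
    (Δ : L →ₗ[K] L ⊗[K] L) : Prop :=
  IsHomLieSuperalgebra σ br α
  ∧ IsHomLieSupercoalgebra σ α Δ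
  ∧ ∀ p q x y, IsHomog σ p x → IsHomog σ q y →
      Δ (br x y) = adT σ br α p (α x) (Δ y) - eps K p q • adT σ br α q (α y) (Δ x)

/-- A multiplicative Hom-Lie superbialgebra. -/
def IsMultHomLieSuperbialgebra (σ : L →ₗ[K] L) (br : L →ₗ[K] L →ₗ[K] L) (α : L →ₗ[K] L)
    (Δ : L →ₗ[K] L ⊗[K] L) : Prop :=
  IsHomLieSuperbialgebra σ br α Δ ∧ IsMultiplicative br α ∧ IsComultiplicative α Δ

/-- An admissible Hom-Lie superalgebra: `[(Id - α²)(x), α(y)] = 0`. -/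
def IsAdmissible (σ : L →ₗ[K] L) (br : L →ₗ[K] L →ₗ[K] L) (α : L →ₗ[K] L) : Prop :=
  IsHomLieSuperalgebra σ br α ∧ ∀ x y, br (x - α (α x)) (α y) = 0

/-- A morphism of Hom-Lie superbialgebras: an even linear map commuting with the
twist maps, the brackets and the cobrackets. -/
def IsBialgMorphism {L₂ : Type*} [AddCommGroup L₂] [Module K L₂]
    (σ₁ : L →ₗ[K] L) (br₁ : L →ₗ[K] L →ₗ[K] L) (α₁ : L →ₗ[K] L) (Δ₁ : L →ₗ[K] L ⊗[K] L)
    (σ₂ : L₂ →ₗ[K] L₂) (br₂ : L₂ →ₗ[K] L₂ →ₗ[K] L₂) (α₂ : L₂ →ₗ[K] L₂)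
    (Δ₂ : L₂ →ₗ[K] L₂ ⊗[K] L₂) (f : L →ₗ[K] L₂) : Prop :=
  (∀ x, σ₂ (f x) = f (σ₁ x)) ∧ (∀ x, α₂ (f x) = f (α₁ x))
  ∧ (∀ x y, f (br₁ x y) = br₂ (f x) (f y))
  ∧ TensorProduct.map f f ∘ₗ Δ₁ = Δ₂ ∘ₗ f

/-- A representation `ρ` of the Hom-Lie superalgebra `(L, br, αg)` on `(M, σM)`
with respect to `A`. -/
def IsRepresentation (σg : L →ₗ[K] L) (br : L →ₗ[K] L →ₗ[K] L) (αg : L →ₗ[K] L)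
    (σM A : M →ₗ[K] M) (ρ : L →ₗ[K] M →ₗ[K] M) : Prop :=
  (∀ x v, σM (ρ x v) = ρ (σg x) (σM v))
  ∧ (∀ x, ρ (αg x) ∘ₗ A = A ∘ₗ ρ x)
  ∧ (∀ p q x y, IsHomog σg p x → IsHomog σg q y →
      ρ (br x y) ∘ₗ A = ρ (αg x) ∘ₗ ρ y - eps K p q • (ρ (αg y) ∘ₗ ρ x))

/-- The signed middle-four interchange
`(r₁ ⊗ r₂) ⊗ (r₁' ⊗ r₂') ↦ (-1)^{|r₂||r₁'|} (r₁ ⊗ r₁') ⊗ (r₂ ⊗ r₂')`. -/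
noncomputable def signedMidSwap (σ : L →ₗ[K] L) :
    (L ⊗[K] L) ⊗[K] (L ⊗[K] L) →ₗ[K] (L ⊗[K] L) ⊗[K] (L ⊗[K] L) :=
  (TensorProduct.assoc K (L ⊗[K] L) L L).toLinearMap
    ∘ₗ TensorProduct.map (TensorProduct.assoc K L L L).symm.toLinearMap LinearMap.id
    ∘ₗ TensorProduct.map (TensorProduct.map LinearMap.id (superTwist σ)) LinearMap.id
    ∘ₗ TensorProduct.map (TensorProduct.assoc K L L L).toLinearMap LinearMap.id
    ∘ₗ (TensorProduct.assoc K (L ⊗[K] L) L L).symm.toLinearMap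

/-- `[r₁₂, r'₁₃] = Σ (-1)^{|r'₁||r₂|} [r₁,r'₁] ⊗ α(r₂) ⊗ α(r'₂)`. -/
noncomputable def br1213 (σ : L →ₗ[K] L) (br : L →ₗ[K] L →ₗ[K] L) (α : L →ₗ[K] L)
    (r r' : L ⊗[K] L) : L ⊗[K] (L ⊗[K] L) :=
  TensorProduct.map (TensorProduct.lift br) (TensorProduct.map α α)
    (signedMidSwap σ (r ⊗ₜ[K] r'))

/-- `[r₁₂, r'₂₃] = Σ α(r₁) ⊗ [r₂,r'₁] ⊗ α(r'₂)`. -/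
noncomputable def br1223 (br : L →ₗ[K] L →ₗ[K] L) (α : L →ₗ[K] L)
    (r r' : L ⊗[K] L) : L ⊗[K] (L ⊗[K] L) :=
  TensorProduct.map α
      (TensorProduct.map (TensorProduct.lift br) α
        ∘ₗ (TensorProduct.assoc K L L L).symm.toLinearMap)
    ((TensorProduct.assoc K L L (L ⊗[K] L)).toLinearMap (r ⊗ₜ[K] r'))

/-- `[r₁₃, r'₂₃] = Σ (-1)^{|r'₁||r₂|} α(r₁) ⊗ α(r'₁) ⊗ [r₂,r'₂]`. -/
noncomputable def br1323 (σ : L →ₗ[K] L) (br : L →ₗ[K] L →ₗ[K] L) (α : L →ₗ[K] L)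
    (r r' : L ⊗[K] L) : L ⊗[K] (L ⊗[K] L) :=
  (TensorProduct.assoc K L L L).toLinearMap
    (TensorProduct.map (TensorProduct.map α α) (TensorProduct.lift br)
      (signedMidSwap σ (r ⊗ₜ[K] r')))

/-- The left-hand side `[[r,r]]^α` of the classical Hom-Yang-Baxter equation. -/
noncomputable def chybeEl (σ : L →ₗ[K] L) (br : L →ₗ[K] L →ₗ[K] L) (α : L →ₗ[K] L)
    (r : L ⊗[K] L) : L ⊗[K] (L ⊗[K] L) :=
  br1213 σ br α r r + br1223 br α r r + br1323 σ br α r r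

/-- A coboundary Hom-Lie superbialgebra. -/
def IsCoboundary (σ : L →ₗ[K] L) (br : L →ₗ[K] L →ₗ[K] L) (α : L →ₗ[K] L)
    (Δ : L →ₗ[K] L ⊗[K] L) (r : L ⊗[K] L) : Prop :=
  IsHomLieSuperbialgebra σ br α Δ
  ∧ TensorProduct.map α α r = r
  ∧ ∀ p x, IsHomog σ p x → Δ x = adT σ br α p x r

/-- A quasi-triangular Hom-Lie superbialgebra: a coboundary one where `r`
satisfies the classical Hom-Yang-Baxter equation. -/
def IsQuasiTriangular (σ : L →ₗ[K] L) (br : L →ₗ[K] L →ₗ[K] L) (α : L →ₗ[K] L)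
    (Δ : L →ₗ[K] L ⊗[K] L) (r : L ⊗[K] L) : Prop :=
  IsCoboundary σ br α Δ r ∧ chybeEl σ br α r = 0

/-- The global linear map `x ↦ ad_x(r) = Σ [x,r₁] ⊗ α(r₂) + (-1)^{|x||r₁|} α(r₁) ⊗ [x,r₂]`. -/
noncomputable def adMap (σ : L →ₗ[K] L) (br : L →ₗ[K] L →ₗ[K] L) (α : L →ₗ[K] L)
    (r : L ⊗[K] L) : L →ₗ[K] L ⊗[K] L :=
  (TensorProduct.map (TensorProduct.lift br) α
      ∘ₗ (TensorProduct.assoc K L L L).symm.toLinearMap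
    + TensorProduct.map α (TensorProduct.lift br)
        ∘ₗ (TensorProduct.assoc K L L L).toLinearMap
        ∘ₗ TensorProduct.map (superTwist σ) LinearMap.id
        ∘ₗ (TensorProduct.assoc K L L L).symm.toLinearMap)
  ∘ₗ (TensorProduct.mk K L (L ⊗[K] L)).flip r

end Defs

/-! Twisting by an endomorphism `β` of the whole structure (commuting with `σ` and `α`,
preserving bracket and cobracket, fixing `r`) gives `(L, β ∘ [·,·], Δ ∘ β, β ∘ α, r)`, and every
axiom of the twisted structure is the image of the original one under `β`, `β ⊗ β` or
`β ⊗ β ⊗ β`; for the cyclic sum in co-Jacobi this uses that the super cyclic map commutes with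
`β ⊗ β ⊗ β`, and for the CHYBE that `[[r, r]]` of the twisted data is `(β ⊗ β ⊗ β)([[r, r]]^α)`.
For a multiplicative structure `α` itself is such an endomorphism, hence so is `α ^ n`. -/

section Twist

variable {K : Type*} [Field K] {L : Type*} [AddCommGroup L] [Module K L]
  {σ α β : L →ₗ[K] L} {br : L →ₗ[K] L →ₗ[K] L} {Δ : L →ₗ[K] L ⊗[K] L}

theorem isBialgMorphism_id : IsBialgMorphism σ br α Δ σ br α Δ LinearMap.id :=
  ⟨fun _ => rfl, fun _ => rfl, fun _ _ => rfl, by simp⟩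

theorem IsBialgMorphism.comp {L₂ L₃ : Type*} [AddCommGroup L₂] [Module K L₂]
    [AddCommGroup L₃] [Module K L₃] {σ₂ α₂ : L₂ →ₗ[K] L₂} {br₂ : L₂ →ₗ[K] L₂ →ₗ[K] L₂}
    {Δ₂ : L₂ →ₗ[K] L₂ ⊗[K] L₂} {σ₃ α₃ : L₃ →ₗ[K] L₃} {br₃ : L₃ →ₗ[K] L₃ →ₗ[K] L₃}
    {Δ₃ : L₃ →ₗ[K] L₃ ⊗[K] L₃} {f : L →ₗ[K] L₂} {g : L₂ →ₗ[K] L₃}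
    (hg : IsBialgMorphism σ₂ br₂ α₂ Δ₂ σ₃ br₃ α₃ Δ₃ g)
    (hf : IsBialgMorphism σ br α Δ σ₂ br₂ α₂ Δ₂ f) :
    IsBialgMorphism σ br α Δ σ₃ br₃ α₃ Δ₃ (g ∘ₗ f) := by
  obtain ⟨hgσ, hgα, hgbr, hgΔ⟩ := hg
  obtain ⟨hfσ, hfα, hfbr, hfΔ⟩ := hf
  refine ⟨fun x => ?_, fun x => ?_, fun x y => ?_, ?_⟩
  · simp only [LinearMap.comp_apply, hgσ, hfσ]
  · simp only [LinearMap.comp_apply, hgα, hfα]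
  · simp only [LinearMap.comp_apply, hgbr, hfbr]
  · rw [TensorProduct.map_comp, LinearMap.comp_assoc, hfΔ, ← LinearMap.comp_assoc, hgΔ,
      LinearMap.comp_assoc]

theorem IsBialgMorphism.pow (hβ : IsBialgMorphism σ br α Δ σ br α Δ β) (n : ℕ) :
    IsBialgMorphism σ br α Δ σ br α Δ (β ^ n) := by
  induction n with
  | zero => exact isBialgMorphism_id
  | succ n ih => rw [pow_succ, Module.End.mul_eq_comp]; exact ih.comp hβ

theorem isBialgMorphism_self (hσα : ∀ x, σ (α x) = α (σ x)) (hm : IsMultiplicative br α)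
    (hcm : IsComultiplicative α Δ) : IsBialgMorphism σ br α Δ σ br α Δ α :=
  ⟨hσα, fun _ => rfl, hm, hcm.symm⟩

theorem IsHomog.map (hσ : ∀ x, σ (β x) = β (σ x)) {p : ZMod 2} {x : L}
    (hx : IsHomog σ p x) : IsHomog σ p (β x) := by
  unfold IsHomog at *
  rw [hσ, hx, map_smul]

theorem map_signPow (hσ : ∀ x, σ (β x) = β (σ x)) (p : ZMod 2) (x : L) :
    β (signPow σ p x) = signPow σ p (β x) := by
  simp [signPow, hσ]

theorem adT_compr₂ (p : ZMod 2) (x : L) :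
    adT σ (br.compr₂ β) (β ∘ₗ α) p x = TensorProduct.map β β ∘ₗ adT σ br α p x := by
  ext y z
  simp [adT]

theorem map_comp_adT (hσ : ∀ x, σ (β x) = β (σ x)) (hα : ∀ x, α (β x) = β (α x))
    (hbr : IsMultiplicative br β) (p : ZMod 2) (x : L) :
    TensorProduct.map β β ∘ₗ adT σ br α p x = adT σ br α p (β x) ∘ₗ TensorProduct.map β β := by
  refine TensorProduct.ext' fun y z => ?_
  simp only [adT, LinearMap.comp_apply, LinearMap.add_apply, TensorProduct.map_tmul, map_add,
    hbr x, ← hα, map_signPow hσ]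

theorem commute_superCyclic_map (hσ : ∀ x, σ (β x) = β (σ x)) :
    Commute (superCyclic σ) (TensorProduct.map β (TensorProduct.map β β)) := by
  change _ ∘ₗ _ = _ ∘ₗ _
  ext x y z
  simp [superCyclic, signOp, hσ]

theorem IsHomLieSuperalgebra.twist (h : IsHomLieSuperalgebra σ br α)
    (hσ : ∀ x, σ (β x) = β (σ x)) (hbr : IsMultiplicative br β) :
    IsHomLieSuperalgebra σ (br.compr₂ β) (β ∘ₗ α) := by
  obtain ⟨hσσ, hσbr, hσα, hskew, hjac⟩ := h
  refine ⟨hσσ, fun x y => ?_, fun x => ?_, fun p q x y hx hy => ?_,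
    fun p q s x y z hx hy hz => ?_⟩
  · simp only [LinearMap.compr₂_apply, hσ, hσbr]
  · simp only [LinearMap.comp_apply, hσ, hσα]
  · simp only [LinearMap.compr₂_apply, hskew p q x y hx hy, map_smul]
  · have hdouble : ∀ a b c, br.compr₂ β ((β ∘ₗ α) a) (br.compr₂ β b c)
        = β (β (br (α a) (br b c))) := fun a b c => by
      simp only [LinearMap.compr₂_apply, LinearMap.comp_apply, hbr _ _]
    have h := congrArg (β ∘ₗ β) (hjac p q s x y z hx hy hz)
    simp only [LinearMap.comp_apply, map_add, map_smul, map_zero] at h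
    simpa only [hdouble, map_add, map_smul] using h

theorem IsMultiplicative.twist (hm : IsMultiplicative br α) (hα : ∀ x, α (β x) = β (α x))
    (hbr : IsMultiplicative br β) : IsMultiplicative (br.compr₂ β) (β ∘ₗ α) := by
  intro x y
  simp only [LinearMap.compr₂_apply, LinearMap.comp_apply]
  rw [hα, hm x y, hbr (α x) (α y)]

theorem IsComultiplicative.twist (hcm : IsComultiplicative α Δ) (hα : ∀ x, α (β x) = β (α x))
    (hΔ : TensorProduct.map β β ∘ₗ Δ = Δ ∘ₗ β) :
    IsComultiplicative (β ∘ₗ α) (Δ ∘ₗ β) := by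
  refine LinearMap.ext fun x => ?_
  have hΔx : ∀ z, Δ (β z) = TensorProduct.map β β (Δ z) := fun z =>
    (LinearMap.congr_fun hΔ z).symm
  have hcmx : ∀ z, Δ (α z) = TensorProduct.map α α (Δ z) := LinearMap.congr_fun hcm
  have hαβ : ∀ t, TensorProduct.map α α (TensorProduct.map β β t)
      = TensorProduct.map β β (TensorProduct.map α α t) := fun t => by
    rw [← LinearMap.comp_apply, ← TensorProduct.map_comp, (LinearMap.ext hα : α ∘ₗ β = β ∘ₗ α),
      TensorProduct.map_comp, LinearMap.comp_apply]
  simp only [LinearMap.comp_apply, hΔx, hcmx, TensorProduct.map_comp, hαβ]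

theorem IsHomLieSupercoalgebra.twist (h : IsHomLieSupercoalgebra σ α Δ)
    (hσ : ∀ x, σ (β x) = β (σ x)) (hα : ∀ x, α (β x) = β (α x))
    (hΔ : TensorProduct.map β β ∘ₗ Δ = Δ ∘ₗ β) :
    IsHomLieSupercoalgebra σ (β ∘ₗ α) (Δ ∘ₗ β) := by
  obtain ⟨hσσ, hσα, hΔσ, hskew, hjac⟩ := h
  refine ⟨hσσ, fun x => ?_, ?_, fun x => hskew (β x), ?_⟩
  · simp only [LinearMap.comp_apply, hσ, hσα]
  · rw [← LinearMap.comp_assoc, hΔσ, LinearMap.comp_assoc, LinearMap.comp_assoc,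
      (LinearMap.ext hσ : σ ∘ₗ β = β ∘ₗ σ)]
  set ξ := superCyclic σ
  set M := TensorProduct.map β (TensorProduct.map β β)
  have hM : TensorProduct.map (β ∘ₗ α) (Δ ∘ₗ β) ∘ₗ TensorProduct.map β β
      = (M ∘ₗ M) ∘ₗ TensorProduct.map α Δ := by
    have hΔx : ∀ z, Δ (β z) = TensorProduct.map β β (Δ z) := fun z =>
      (LinearMap.congr_fun hΔ z).symm
    refine TensorProduct.ext' fun x y => ?_
    simp [M, hΔx, hα]
  have hξM : Commute ξ M := commute_superCyclic_map hσ
  have hJ : Commute (LinearMap.id + ξ + ξ ∘ₗ ξ) M :=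
    ((Commute.one_left M).add_left hξM).add_left (hξM.mul_left hξM)
  have hcomm : (LinearMap.id + ξ + ξ ∘ₗ ξ) ∘ₗ (M ∘ₗ M) = (M ∘ₗ M) ∘ₗ (LinearMap.id + ξ + ξ ∘ₗ ξ) :=
    (hJ.mul_right hJ).eq
  calc (LinearMap.id + ξ + ξ ∘ₗ ξ) ∘ₗ TensorProduct.map (β ∘ₗ α) (Δ ∘ₗ β) ∘ₗ Δ ∘ₗ β
      = (LinearMap.id + ξ + ξ ∘ₗ ξ)
          ∘ₗ (TensorProduct.map (β ∘ₗ α) (Δ ∘ₗ β) ∘ₗ TensorProduct.map β β) ∘ₗ Δ := by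
        rw [LinearMap.comp_assoc _ (TensorProduct.map β β), hΔ]
    _ = (M ∘ₗ M) ∘ₗ (LinearMap.id + ξ + ξ ∘ₗ ξ) ∘ₗ TensorProduct.map α Δ ∘ₗ Δ := by
        rw [hM, LinearMap.comp_assoc, ← LinearMap.comp_assoc, hcomm, LinearMap.comp_assoc]
    _ = 0 := by rw [hjac, LinearMap.comp_zero]

theorem IsHomLieSuperbialgebra.twist (h : IsHomLieSuperbialgebra σ br α Δ)
    (hβ : IsBialgMorphism σ br α Δ σ br α Δ β) :
    IsHomLieSuperbialgebra σ (br.compr₂ β) (β ∘ₗ α) (Δ ∘ₗ β) := by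
  obtain ⟨halg, hcoalg, hcompat⟩ := h
  obtain ⟨hσ, hα, hbr, hΔ⟩ := hβ
  refine ⟨halg.twist hσ hbr, hcoalg.twist hσ hα hΔ, fun p q x y hx hy => ?_⟩
  have hΔx : ∀ z, Δ (β z) = TensorProduct.map β β (Δ z) := fun z =>
    (LinearMap.congr_fun hΔ z).symm
  calc Δ (β (β (br x y)))
      = TensorProduct.map β β (Δ (br (β x) (β y))) := by rw [hbr x y, hΔx]
    _ = TensorProduct.map β β (adT σ br α p (α (β x)) (Δ (β y))
          - eps K p q • adT σ br α q (α (β y)) (Δ (β x))) := by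
        rw [hcompat p q (β x) (β y) (hx.map hσ) (hy.map hσ)]
    _ = _ := by simp only [adT_compr₂, LinearMap.comp_apply, hα, hΔx, map_sub, map_smul]

theorem IsCoboundary.twist {r : L ⊗[K] L} (h : IsCoboundary σ br α Δ r)
    (hβ : IsBialgMorphism σ br α Δ σ br α Δ β) (hr : TensorProduct.map β β r = r) :
    IsCoboundary σ (br.compr₂ β) (β ∘ₗ α) (Δ ∘ₗ β) r := by
  obtain ⟨hbi, hαr, hΔr⟩ := h
  refine ⟨hbi.twist hβ, by rw [TensorProduct.map_comp, LinearMap.comp_apply, hαr, hr],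
    fun p x hx => ?_⟩
  obtain ⟨hσ, hα, hbr, -⟩ := hβ
  calc Δ (β x) = adT σ br α p (β x) (TensorProduct.map β β r) := by
        rw [hr, hΔr p _ (hx.map hσ)]
    _ = (TensorProduct.map β β ∘ₗ adT σ br α p x) r :=
        (LinearMap.congr_fun (map_comp_adT hσ hα hbr p x) r).symm
    _ = _ := by rw [adT_compr₂]

theorem br1213_twist (r r' : L ⊗[K] L) :
    br1213 σ (br.compr₂ β) (β ∘ₗ α) r r'
      = TensorProduct.map β (TensorProduct.map β β) (br1213 σ br α r r') := by
  rw [br1213, br1213, TensorProduct.lift_compr₂, TensorProduct.map_comp, TensorProduct.map_comp,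
    LinearMap.comp_apply]

theorem br1223_twist (r r' : L ⊗[K] L) :
    br1223 (br.compr₂ β) (β ∘ₗ α) r r'
      = TensorProduct.map β (TensorProduct.map β β) (br1223 br α r r') := by
  rw [br1223, br1223, TensorProduct.lift_compr₂, TensorProduct.map_comp β β (lift br) α,
    LinearMap.comp_assoc, TensorProduct.map_comp, LinearMap.comp_apply]

theorem br1323_twist (r r' : L ⊗[K] L) :
    br1323 σ (br.compr₂ β) (β ∘ₗ α) r r'
      = TensorProduct.map β (TensorProduct.map β β) (br1323 σ br α r r') := by
  rw [br1323, br1323, TensorProduct.lift_compr₂, TensorProduct.map_comp, TensorProduct.map_comp,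
    LinearMap.comp_apply]
  exact (TensorProduct.map_map_assoc β β β _).symm

theorem chybeEl_twist (r : L ⊗[K] L) :
    chybeEl σ (br.compr₂ β) (β ∘ₗ α) r
      = TensorProduct.map β (TensorProduct.map β β) (chybeEl σ br α r) := by
  simp only [chybeEl, br1213_twist, br1223_twist, br1323_twist, map_add]

theorem IsQuasiTriangular.twist {r : L ⊗[K] L} (h : IsQuasiTriangular σ br α Δ r)
    (hβ : IsBialgMorphism σ br α Δ σ br α Δ β) (hr : TensorProduct.map β β r = r) :
    IsQuasiTriangular σ (br.compr₂ β) (β ∘ₗ α) (Δ ∘ₗ β) r :=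
  ⟨h.1.twist hβ hr, by rw [chybeEl_twist, h.2, map_zero]⟩

end Twist

theorem coboundaryHomLieSuperbialgebra_pow_twist_general
    {K : Type*} [Field K] {L : Type*} [AddCommGroup L] [Module K L]
    (σ : L →ₗ[K] L) (br : L →ₗ[K] L →ₗ[K] L) (α : L →ₗ[K] L) (Δ : L →ₗ[K] L ⊗[K] L)
    (r : L ⊗[K] L)
    (hc : IsCoboundary σ br α Δ r)
    (hm : IsMultiplicative br α) (hcm : IsComultiplicative α Δ) (n : ℕ) :
    (IsCoboundary σ (br.compr₂ (α ^ n)) (α ^ (n + 1)) (Δ ∘ₗ (α ^ n)) r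
      ∧ IsMultiplicative (br.compr₂ (α ^ n)) (α ^ (n + 1))
      ∧ IsComultiplicative (α ^ (n + 1)) (Δ ∘ₗ (α ^ n)))
      ∧ (IsQuasiTriangular σ br α Δ r →
          IsQuasiTriangular σ (br.compr₂ (α ^ n)) (α ^ (n + 1)) (Δ ∘ₗ (α ^ n)) r) := by
  have hσα : ∀ x, σ (α x) = α (σ x) := hc.1.1.2.2.1
  have hαn : IsBialgMorphism σ br α Δ σ br α Δ (α ^ n) := (isBialgMorphism_self hσα hm hcm).pow n
  have hr : TensorProduct.map (α ^ n) (α ^ n) r = r := by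
    rw [← TensorProduct.map_pow, Module.End.pow_apply]
    exact Function.iterate_fixed hc.2.1 n
  rw [pow_succ, Module.End.mul_eq_comp]
  exact ⟨⟨hc.twist hαn hr, hm.twist hαn.2.1 hαn.2.2.1, hcm.twist hαn.2.1 hαn.2.2.2⟩,
    fun hq => hq.twist hαn hr⟩

/-- A multiplicative coboundary (resp. quasi-triangular)
Hom-Lie superbialgebra yields an infinite sequence `L_{αⁿ}` of such. -/
theorem coboundaryHomLieSuperbialgebra_pow_twist
    {K : Type*} [Field K] [CharZero K] {L : Type*} [AddCommGroup L] [Module K L]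
    (σ : L →ₗ[K] L) (br : L →ₗ[K] L →ₗ[K] L) (α : L →ₗ[K] L) (Δ : L →ₗ[K] L ⊗[K] L)
    (r : L ⊗[K] L)
    (hc : IsCoboundary σ br α Δ r)
    (hm : IsMultiplicative br α) (hcm : IsComultiplicative α Δ) (n : ℕ) :
    (IsCoboundary σ (br.compr₂ (α ^ n)) (α ^ (n + 1)) (Δ ∘ₗ (α ^ n)) r
      ∧ IsMultiplicative (br.compr₂ (α ^ n)) (α ^ (n + 1))
      ∧ IsComultiplicative (α ^ (n + 1)) (Δ ∘ₗ (α ^ n)))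
      ∧ (IsQuasiTriangular σ br α Δ r →
          IsQuasiTriangular σ (br.compr₂ (α ^ n)) (α ^ (n + 1)) (Δ ∘ₗ (α ^ n)) r) :=
  coboundaryHomLieSuperbialgebra_pow_twist_general σ br α Δ r hc hm hcm n
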